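/- Let M and M' be path-connected spaces and f: M → M' a map inducing an isomorphism on H₁(−;Z) and a surjection on H₂(−;Z). Then for every k ≥ 1, f induces an isomorphism π₁(M)/π₁(M)^k → π₁(M')/π₁(M')^k of lower central series quotients. -/

import Mathlib

/-! Stallings' theorem (group-theoretic form): if `φ : G → H` induces an isomorphism on
`H₁` (abelianizations) and a surjection on `H₂` (group homology, via the Hopf formula),
then `φ` induces isomorphisms `G/G^k ≅ H/H^k` of all lower central series quotients. -/

section HopfH2

variable (G : Type*) [Group G]

/-- The canonical presentation `FreeGroup G → G`. -/
noncomputable abbrev presHom : FreeGroup G →* G := FreeGroup.lift id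

/-- The relation subgroup `R` of the canonical presentation. -/
noncomputable abbrev relSub : Subgroup (FreeGroup G) := (presHom G).ker

/-- `R ∩ [F, F]`, the numerator in Hopf's formula. -/
noncomputable abbrev hopfNum : Subgroup (FreeGroup G) :=
  relSub G ⊓ commutator (FreeGroup G)

/-- `[F, R]`, the denominator in Hopf's formula. -/
noncomputable abbrev hopfDen : Subgroup (FreeGroup G) :=
  ⁅(⊤ : Subgroup (FreeGroup G)), relSub G⁆

noncomputable instance : ((hopfDen G).subgroupOf (hopfNum G)).Normal :=
  Subgroup.Normal.subgroupOf inferInstance _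

/-- The second group homology of `G` via Hopf's formula: `H₂(G) = (R ∩ [F,F])/[F,R]`. -/
noncomputable abbrev groupH2 :=
  hopfNum G ⧸ (hopfDen G).subgroupOf (hopfNum G)

variable {G} {H : Type*} [Group H] (φ : G →* H)

theorem presHom_naturality : (presHom H).comp (FreeGroup.map φ) = φ.comp (presHom G) := by
  ext g
  simp [presHom]

theorem map_relSub_le : (relSub G).map (FreeGroup.map φ) ≤ relSub H := by
  rintro x ⟨y, hy, rfl⟩
  have := congrArg (fun f : FreeGroup G →* H => f y) (presHom_naturality φ)
  simp only [MonoidHom.comp_apply] at this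
  simp only [relSub, MonoidHom.mem_ker] at hy ⊢
  rw [this, hy, map_one]

theorem map_hopfNum_le : (hopfNum G).map (FreeGroup.map φ) ≤ hopfNum H := by
  refine le_trans (Subgroup.map_inf_le _ _ _) (inf_le_inf (map_relSub_le φ) ?_)
  rw [commutator_def, commutator_def, Subgroup.map_commutator]
  exact Subgroup.commutator_mono le_top le_top

theorem map_hopfDen_le : (hopfDen G).map (FreeGroup.map φ) ≤ hopfDen H := by
  rw [Subgroup.map_commutator]
  exact Subgroup.commutator_mono le_top (map_relSub_le φ)

/-- The restriction of `FreeGroup.map φ` to the Hopf numerators. -/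
noncomputable def hopfRestrict : hopfNum G →* hopfNum H :=
  MonoidHom.codRestrict ((FreeGroup.map φ).domRestrict (hopfNum G)) (hopfNum H)
    (fun x => map_hopfNum_le φ (Subgroup.mem_map_of_mem _ x.2))

/-- The map induced by `φ` on second group homology (Hopf formula). -/
noncomputable def groupH2Map : groupH2 G →* groupH2 H :=
  QuotientGroup.map _ _ (hopfRestrict φ)
    (fun x hx => by
      have : (FreeGroup.map φ) (x : FreeGroup G) ∈ hopfDen H :=
        map_hopfDen_le φ (Subgroup.mem_map_of_mem _ hx)
      exact this)

end HopfH2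

/-- The map induced by `φ` on the `k`-th lower central series quotients. -/
noncomputable def lcsQuotMap {G H : Type*} [Group G] [Group H] (φ : G →* H) (k : ℕ) :
    (G ⧸ Subgroup.lowerCentralSeries (⊤ : Subgroup G) k) →*
      (H ⧸ Subgroup.lowerCentralSeries (⊤ : Subgroup H) k) :=
  QuotientGroup.map _ _ φ
    (Subgroup.map_le_iff_le_comap.mp (Subgroup.lowerCentralSeries.map φ k))

section StallingsAux

/-- The canonical presentation map is surjective. -/
theorem aux_presHom_surjective (G : Type*) [Group G] : Function.Surjective (presHom G) :=
  fun g => ⟨FreeGroup.of g, by simp⟩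

theorem aux_lcs_succ {G : Type*} [Group G] (n : ℕ) :
    Subgroup.lowerCentralSeries (⊤ : Subgroup G) (n + 1) = ⁅Subgroup.lowerCentralSeries (⊤ : Subgroup G) n, ⊤⁆ := rfl

/-- The image of the lower central series under a surjective homomorphism. -/
theorem aux_lcs_map_eq {G H : Type*} [Group G] [Group H] (f : G →* H)
    (hf : Function.Surjective f) (k : ℕ) :
    (Subgroup.lowerCentralSeries (⊤ : Subgroup G) k).map f = Subgroup.lowerCentralSeries (⊤ : Subgroup H) k := by
  induction k with
  | zero =>
    rw [Subgroup.lowerCentralSeries_zero, Subgroup.lowerCentralSeries_zero]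
    exact Subgroup.map_top_of_surjective f hf
  | succ n ih =>
    rw [aux_lcs_succ, aux_lcs_succ, Subgroup.map_commutator, ih,
      Subgroup.map_top_of_surjective f hf]

theorem aux_map_comm_le {A B : Type*} [Group A] [Group B] (f : A →* B) :
    (commutator A).map f ≤ commutator B := by
  rw [commutator_def, commutator_def, Subgroup.map_commutator]
  exact Subgroup.commutator_mono le_top le_top

/-- The preimage of the `k`-th lower central series under the canonical presentation. -/
noncomputable def lcsPre (G : Type*) [Group G] (k : ℕ) : Subgroup (FreeGroup G) :=
  (Subgroup.lowerCentralSeries (⊤ : Subgroup G) k).comap (presHom G)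

instance lcsPre_normal (G : Type*) [Group G] (k : ℕ) : (lcsPre G k).Normal :=
  Subgroup.normal_comap _

theorem relSub_le_lcsPre (G : Type*) [Group G] (k : ℕ) : relSub G ≤ lcsPre G k := by
  intro x hx
  have : presHom G x = 1 := hx
  simp only [lcsPre, Subgroup.mem_comap, this]
  exact one_mem _

theorem map_lcsPre (G : Type*) [Group G] (k : ℕ) :
    (lcsPre G k).map (presHom G) = Subgroup.lowerCentralSeries (⊤ : Subgroup G) k :=
  Subgroup.map_comap_eq_self_of_surjective (aux_presHom_surjective G) _

theorem aux_map_commutator_eq (G : Type*) [Group G] :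
    (commutator (FreeGroup G)).map (presHom G) = commutator G := by
  rw [commutator_def, commutator_def, Subgroup.map_commutator,
    Subgroup.map_top_of_surjective _ (aux_presHom_surjective G)]

theorem aux_map_den (G : Type*) [Group G] (k : ℕ) :
    (⁅(⊤ : Subgroup (FreeGroup G)), lcsPre G k⁆).map (presHom G) =
      Subgroup.lowerCentralSeries (⊤ : Subgroup G) (k + 1) := by
  rw [Subgroup.map_commutator, Subgroup.map_top_of_surjective _ (aux_presHom_surjective G),
    map_lcsPre, aux_lcs_succ, Subgroup.commutator_comm]

open scoped commutatorElement in
/-- **Key lemma**: if two homomorphisms agree pointwise modulo a normal subgroup `S`,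
then they agree on the commutator subgroup modulo `⁅⊤, S⁆`. -/
theorem aux_key {F' F : Type*} [Group F'] [Group F] (μ ν : F' →* F) (S : Subgroup F)
    [S.Normal] (h : ∀ y, μ y * (ν y)⁻¹ ∈ S) :
    ∀ w ∈ commutator F', μ w * (ν w)⁻¹ ∈ ⁅(⊤ : Subgroup F), S⁆ := by
  set T : Subgroup F := ⁅(⊤ : Subgroup F), S⁆ with hT
  haveI : T.Normal := Subgroup.commutator_normal ⊤ S
  have hcent : ∀ s ∈ S, ∀ t : F, ((s * t : F) : F ⧸ T) = ((t * s : F) : F ⧸ T) := by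
    intro s hs t
    rw [QuotientGroup.eq]
    have hmem : ⁅t⁻¹, s⁻¹⁆ ∈ T :=
      Subgroup.commutator_mem_commutator (Subgroup.mem_top _) (S.inv_mem hs)
    have : (s * t)⁻¹ * (t * s) = ⁅t⁻¹, s⁻¹⁆ := by
      rw [commutatorElement_def]; group
    rw [this]; exact hmem
  let D : F' →* F ⧸ T :=
    { toFun := fun y => ((μ y * (ν y)⁻¹ : F) : F ⧸ T)
      map_one' := by simp
      map_mul' := by
        intro x y
        have e1 : μ (x * y) * (ν (x * y))⁻¹ =
            μ x * ((μ y * (ν y)⁻¹) * (ν x)⁻¹) := by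
          rw [map_mul, map_mul]; group
        have e2 : μ x * ((ν x)⁻¹ * (μ y * (ν y)⁻¹)) =
            (μ x * (ν x)⁻¹) * (μ y * (ν y)⁻¹) := by group
        show ((μ (x * y) * (ν (x * y))⁻¹ : F) : F ⧸ T) =
          ((μ x * (ν x)⁻¹ : F) : F ⧸ T) * ((μ y * (ν y)⁻¹ : F) : F ⧸ T)
        rw [e1, QuotientGroup.mk_mul, hcent _ (h y) ((ν x)⁻¹), ← QuotientGroup.mk_mul,
          e2, QuotientGroup.mk_mul] }
  have hDcomm : ∀ y : F', ∀ b : F ⧸ T, Commute (D y) b := by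
    intro y b
    obtain ⟨t, rfl⟩ := QuotientGroup.mk_surjective b
    show ((μ y * (ν y)⁻¹ : F) : F ⧸ T) * (t : F ⧸ T) =
      (t : F ⧸ T) * ((μ y * (ν y)⁻¹ : F) : F ⧸ T)
    rw [← QuotientGroup.mk_mul, ← QuotientGroup.mk_mul, hcent _ (h y) t]
  have hker : commutator F' ≤ D.ker := by
    rw [commutator_def, Subgroup.commutator_le]
    intro g₁ _ g₂ _
    rw [MonoidHom.mem_ker, map_commutatorElement]
    exact commutatorElement_eq_one_iff_commute.mpr (hDcomm g₁ (D g₂))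
  intro w hw
  have : D w = 1 := hker hw
  exact (QuotientGroup.eq_one_iff _).mp this

theorem lcsQuotMap_mk {G H : Type*} [Group G] [Group H] (φ : G →* H) (k : ℕ) (x : G) :
    lcsQuotMap φ k (x : G ⧸ Subgroup.lowerCentralSeries (⊤ : Subgroup G) k) =
      ((φ x : H) : H ⧸ Subgroup.lowerCentralSeries (⊤ : Subgroup H) k) := by
  simp [lcsQuotMap]

end StallingsAux

/-- **Stallings' theorem.** If `φ : G → H` induces an isomorphism on first homology
(abelianizations) and a surjection on second group homology, then for every `k` the
induced map `G/G^k → H/H^k` on lower central series quotients is an isomorphism. -/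
theorem stallings_theorem {G H : Type*} [Group G] [Group H] (φ : G →* H)
    (h1 : Function.Bijective (Abelianization.map φ))
    (h2 : Function.Surjective (groupH2Map φ)) (k : ℕ) :
    Function.Bijective (lcsQuotMap φ k) := by
  -- Membership forms of the `H₁` hypothesis.
  have h1inj : ∀ x : G, φ x ∈ commutator H → x ∈ commutator G := by
    intro x hx
    have e1 : Abelianization.map φ (Abelianization.of x) = 1 := by
      rw [Abelianization.map_of]
      exact (QuotientGroup.eq_one_iff (φ x)).mpr hx
    have e2 : Abelianization.of x = 1 := by
      have := h1.1 (by rw [e1, map_one] : Abelianization.map φ (Abelianization.of x) =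
        Abelianization.map φ 1)
      simpa using this
    exact (QuotientGroup.eq_one_iff x).mp e2
  have h1surj : ∀ h : H, ∃ x : G, (φ x)⁻¹ * h ∈ commutator H := by
    intro h
    obtain ⟨a, ha⟩ := h1.2 (Abelianization.of h)
    revert ha
    refine QuotientGroup.induction_on a ?_
    intro x hx
    refine ⟨x, ?_⟩
    have hx' : Abelianization.of (φ x) = Abelianization.of h := by
      rw [← Abelianization.map_of]; exact hx
    exact (QuotientGroup.eq).mp hx'
  -- Membership form of the `H₂` hypothesis.
  have h2surj : ∀ w' : FreeGroup H, w' ∈ hopfNum H →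
      ∃ w : FreeGroup G, w ∈ hopfNum G ∧
        ((FreeGroup.map φ) w)⁻¹ * w' ∈ hopfDen H := by
    intro w' hw'
    obtain ⟨a, ha⟩ := h2 ((⟨w', hw'⟩ : hopfNum H) :
      hopfNum H ⧸ (hopfDen H).subgroupOf (hopfNum H))
    revert ha
    refine QuotientGroup.induction_on a ?_
    intro w hw
    refine ⟨(w : FreeGroup G), w.2, ?_⟩
    have hw2 : (hopfRestrict φ w)⁻¹ * (⟨w', hw'⟩ : hopfNum H) ∈
        (hopfDen H).subgroupOf (hopfNum H) := by
      have : (QuotientGroup.mk (hopfRestrict φ w) :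
          hopfNum H ⧸ (hopfDen H).subgroupOf (hopfNum H)) = QuotientGroup.mk ⟨w', hw'⟩ := hw
      exact (QuotientGroup.eq).mp this
    rw [Subgroup.mem_subgroupOf] at hw2
    exact hw2
  induction k with
  | zero =>
    haveI s1 : Subsingleton (G ⧸ Subgroup.lowerCentralSeries (⊤ : Subgroup G) 0) := by
      rw [Subgroup.lowerCentralSeries_zero]; exact QuotientGroup.subsingleton_quotient_top
    haveI s2 : Subsingleton (H ⧸ Subgroup.lowerCentralSeries (⊤ : Subgroup H) 0) := by
      rw [Subgroup.lowerCentralSeries_zero]; exact QuotientGroup.subsingleton_quotient_top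
    exact ⟨fun a b _ => Subsingleton.elim a b, fun b => ⟨1, Subsingleton.elim _ _⟩⟩
  | succ k ih =>
    -- Membership forms of the inductive hypothesis.
    have inj_k : ∀ x : G, φ x ∈ Subgroup.lowerCentralSeries (⊤ : Subgroup H) k → x ∈ Subgroup.lowerCentralSeries (⊤ : Subgroup G) k := by
      intro x hx
      have e : lcsQuotMap φ k ((x : G) : G ⧸ Subgroup.lowerCentralSeries (⊤ : Subgroup G) k) = lcsQuotMap φ k 1 := by
        rw [map_one, lcsQuotMap_mk]
        exact (QuotientGroup.eq_one_iff (φ x)).mpr hx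
      exact (QuotientGroup.eq_one_iff x).mp (ih.1 e)
    have surj_k : ∀ h : H, ∃ x : G, (φ x)⁻¹ * h ∈ Subgroup.lowerCentralSeries (⊤ : Subgroup H) k := by
      intro h
      obtain ⟨a, ha⟩ := ih.2 ((h : H) : H ⧸ Subgroup.lowerCentralSeries (⊤ : Subgroup H) k)
      revert ha
      refine QuotientGroup.induction_on a ?_
      intro x hx
      rw [lcsQuotMap_mk] at hx
      exact ⟨x, (QuotientGroup.eq).mp hx⟩
    -- The lifting homomorphism `lam : FreeGroup H →* FreeGroup G`.
    choose a ha using surj_k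
    set lam : FreeGroup H →* FreeGroup G :=
      FreeGroup.lift (fun h => FreeGroup.of (a h)) with hlam
    -- `φ ∘ π ∘ lam` agrees with `π'` modulo the `k`-th lower central series.
    have key3 : ∀ w : FreeGroup H,
        (φ (presHom G (lam w)))⁻¹ * presHom H w ∈ Subgroup.lowerCentralSeries (⊤ : Subgroup H) k := by
      have heq : ((QuotientGroup.mk' (Subgroup.lowerCentralSeries (⊤ : Subgroup H) k)).comp
            (φ.comp ((presHom G).comp lam)))
          = (QuotientGroup.mk' (Subgroup.lowerCentralSeries (⊤ : Subgroup H) k)).comp (presHom H) := by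
        apply FreeGroup.ext_hom
        intro h
        simp only [MonoidHom.comp_apply, hlam, FreeGroup.lift_apply_of, QuotientGroup.mk'_apply,
          FreeGroup.lift_apply_of, id_eq]
        exact (QuotientGroup.eq).mpr (ha h)
      intro w
      have := DFunLike.congr_fun heq w
      simp only [MonoidHom.comp_apply, QuotientGroup.mk'_apply] at this
      exact (QuotientGroup.eq).mp this
    -- `lam` maps `lcsPre H k` into `lcsPre G k`.
    have lamS : ∀ w ∈ lcsPre H k, lam w ∈ lcsPre G k := by
      intro w hw
      have hw' : presHom H w ∈ Subgroup.lowerCentralSeries (⊤ : Subgroup H) k := hw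
      have h3 := key3 w
      have hmem : φ (presHom G (lam w)) ∈ Subgroup.lowerCentralSeries (⊤ : Subgroup H) k := by
        have e : φ (presHom G (lam w)) =
            presHom H w * ((φ (presHom G (lam w)))⁻¹ * presHom H w)⁻¹ := by group
        rw [e]; exact mul_mem hw' (inv_mem h3)
      exact Subgroup.mem_comap.mpr (inj_k _ hmem)
    -- `ψ ∘ lam` agrees with the identity modulo `lcsPre H k`.
    have hpsilam : ∀ w : FreeGroup H,
        (FreeGroup.map φ) (lam w) * w⁻¹ ∈ lcsPre H k := by
      intro w
      have h3 := key3 w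
      have hv : (presHom H w)⁻¹ * φ (presHom G (lam w)) ∈ Subgroup.lowerCentralSeries (⊤ : Subgroup H) k := by
        have := inv_mem h3
        simpa [mul_inv_rev] using this
      have hconj : φ (presHom G (lam w)) *
          (((presHom H w)⁻¹ * φ (presHom G (lam w)))) * (φ (presHom G (lam w)))⁻¹ ∈
          Subgroup.lowerCentralSeries (⊤ : Subgroup H) k :=
        Subgroup.Normal.conj_mem inferInstance _ hv _
      refine Subgroup.mem_comap.mpr ?_
      have e : presHom H ((FreeGroup.map φ) (lam w) * w⁻¹) =
          φ (presHom G (lam w)) * (presHom H w)⁻¹ := by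
        rw [map_mul, map_inv]
        congr 1
        exact DFunLike.congr_fun (presHom_naturality φ) (lam w)
      rw [e]
      have e2 : φ (presHom G (lam w)) * (presHom H w)⁻¹ =
          φ (presHom G (lam w)) * (((presHom H w)⁻¹ * φ (presHom G (lam w)))) *
            (φ (presHom G (lam w)))⁻¹ := by group
      rw [e2]; exact hconj
    -- `lam ∘ ψ` agrees with the identity modulo `lcsPre G k`.
    have hlampsi : ∀ x : FreeGroup G,
        lam ((FreeGroup.map φ) x) * x⁻¹ ∈ lcsPre G k := by
      intro x
      have h3 := key3 ((FreeGroup.map φ) x)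
      have e : presHom H ((FreeGroup.map φ) x) = φ (presHom G x) :=
        DFunLike.congr_fun (presHom_naturality φ) x
      rw [e, ← map_inv, ← map_mul] at h3
      have h4 : (presHom G (lam ((FreeGroup.map φ) x)))⁻¹ * presHom G x ∈
          Subgroup.lowerCentralSeries (⊤ : Subgroup G) k := inj_k _ h3
      refine Subgroup.mem_comap.mpr ?_
      rw [map_mul, map_inv]
      have hv : (presHom G x)⁻¹ * presHom G (lam ((FreeGroup.map φ) x)) ∈
          Subgroup.lowerCentralSeries (⊤ : Subgroup G) k := by
        have := inv_mem h4; simpa [mul_inv_rev] using this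
      have e2 : presHom G (lam ((FreeGroup.map φ) x)) * (presHom G x)⁻¹ =
          presHom G (lam ((FreeGroup.map φ) x)) *
            ((presHom G x)⁻¹ * presHom G (lam ((FreeGroup.map φ) x))) *
            (presHom G (lam ((FreeGroup.map φ) x)))⁻¹ := by group
      rw [e2]
      exact Subgroup.Normal.conj_mem inferInstance _ hv _
    -- The two key-lemma instances.
    have KI : ∀ w ∈ commutator (FreeGroup G),
        lam ((FreeGroup.map φ) w) * w⁻¹ ∈ ⁅(⊤ : Subgroup (FreeGroup G)), lcsPre G k⁆ := by
      have := aux_key (lam.comp (FreeGroup.map φ)) (MonoidHom.id _) (lcsPre G k)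
        (fun y => by simpa using hlampsi y)
      intro w hw
      simpa using this w hw
    have KS : ∀ w ∈ commutator (FreeGroup H),
        (FreeGroup.map φ) (lam w) * w⁻¹ ∈ ⁅(⊤ : Subgroup (FreeGroup H)), lcsPre H k⁆ := by
      have := aux_key ((FreeGroup.map φ).comp lam) (MonoidHom.id _) (lcsPre H k)
        (fun y => by simpa using hpsilam y)
      intro w hw
      simpa using this w hw
    -- Injectivity step.
    have stepI : ∀ x : G, x ∈ Subgroup.lowerCentralSeries (⊤ : Subgroup G) k →
        φ x ∈ Subgroup.lowerCentralSeries (⊤ : Subgroup H) (k + 1) → x ∈ Subgroup.lowerCentralSeries (⊤ : Subgroup G) (k + 1) := by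
      intro g hgk hg1
      have hgc : g ∈ commutator G := by
        refine h1inj g ?_
        have hle : Subgroup.lowerCentralSeries (⊤ : Subgroup H) (k + 1) ≤ Subgroup.lowerCentralSeries (⊤ : Subgroup H) 1 :=
          Subgroup.lowerCentralSeries_antitone _ (Nat.succ_le_succ (Nat.zero_le k))
        rw [Subgroup.top_lowerCentralSeries_one] at hle
        exact hle hg1
      have : g ∈ (commutator (FreeGroup G)).map (presHom G) := by
        rw [aux_map_commutator_eq]; exact hgc
      obtain ⟨w, hwc, hwg⟩ := this
      have hwS : w ∈ lcsPre G k := Subgroup.mem_comap.mpr (by rw [hwg]; exact hgk)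
      have : φ g ∈ (⁅(⊤ : Subgroup (FreeGroup H)), lcsPre H k⁆).map (presHom H) := by
        rw [aux_map_den]; exact hg1
      obtain ⟨u, huT, hug⟩ := this
      have hnum : (FreeGroup.map φ) w * u⁻¹ ∈ hopfNum H := by
        refine Subgroup.mem_inf.mpr ⟨?_, ?_⟩
        · show presHom H ((FreeGroup.map φ) w * u⁻¹) = 1
          rw [map_mul, map_inv, hug]
          have e : presHom H ((FreeGroup.map φ) w) = φ (presHom G w) :=
            DFunLike.congr_fun (presHom_naturality φ) w
          rw [e, hwg, mul_inv_cancel]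
        · refine mul_mem ?_ (inv_mem ?_)
          · exact aux_map_comm_le (FreeGroup.map φ) (Subgroup.mem_map_of_mem _ hwc)
          · exact Subgroup.commutator_mono le_top le_top huT
      obtain ⟨v, hvnum, hv2⟩ := h2surj _ hnum
      have hvR : v ∈ relSub G := hvnum.1
      have hvc : v ∈ commutator (FreeGroup G) := hvnum.2
      -- `w₂ := v⁻¹ * w`
      have hw2c : v⁻¹ * w ∈ commutator (FreeGroup G) := mul_mem (inv_mem hvc) hwc
      have hw2g : presHom G (v⁻¹ * w) = g := by
        rw [map_mul, map_inv]
        have : presHom G v = 1 := hvR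
        rw [this, hwg, inv_one, one_mul]
      have hpsiw2 : (FreeGroup.map φ) (v⁻¹ * w) ∈
          ⁅(⊤ : Subgroup (FreeGroup H)), lcsPre H k⁆ := by
        have hden : ((FreeGroup.map φ) v)⁻¹ * ((FreeGroup.map φ) w * u⁻¹) ∈
            ⁅(⊤ : Subgroup (FreeGroup H)), lcsPre H k⁆ :=
          Subgroup.commutator_mono le_rfl (relSub_le_lcsPre H k) hv2
        have e : (FreeGroup.map φ) (v⁻¹ * w) =
            (((FreeGroup.map φ) v)⁻¹ * ((FreeGroup.map φ) w * u⁻¹)) * u := by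
          rw [map_mul, map_inv]; group
        rw [e]
        exact mul_mem hden huT
      have hlampsiw2 : lam ((FreeGroup.map φ) (v⁻¹ * w)) ∈
          ⁅(⊤ : Subgroup (FreeGroup G)), lcsPre G k⁆ := by
        have hmaple : Subgroup.map lam ⁅(⊤ : Subgroup (FreeGroup H)), lcsPre H k⁆ ≤
            ⁅(⊤ : Subgroup (FreeGroup G)), lcsPre G k⁆ := by
          rw [Subgroup.map_commutator]
          exact Subgroup.commutator_mono le_top
            (Subgroup.map_le_iff_le_comap.mpr (fun y hy => lamS y hy))
        exact hmaple (Subgroup.mem_map_of_mem _ hpsiw2)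
      have hw2T : v⁻¹ * w ∈ ⁅(⊤ : Subgroup (FreeGroup G)), lcsPre G k⁆ := by
        have hKI := KI _ hw2c
        have e : v⁻¹ * w =
            (lam ((FreeGroup.map φ) (v⁻¹ * w)) * (v⁻¹ * w)⁻¹)⁻¹ *
              lam ((FreeGroup.map φ) (v⁻¹ * w)) := by group
        rw [e]
        exact mul_mem (inv_mem hKI) hlampsiw2
      have : g ∈ Subgroup.lowerCentralSeries (⊤ : Subgroup G) (k + 1) := by
        rw [← aux_map_den G k, ← hw2g]
        exact Subgroup.mem_map_of_mem _ hw2T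
      exact this
    -- Surjectivity step.
    have stepS : ∀ h : H, h ∈ Subgroup.lowerCentralSeries (⊤ : Subgroup H) k →
        ∃ g : G, (φ g)⁻¹ * h ∈ Subgroup.lowerCentralSeries (⊤ : Subgroup H) (k + 1) := by
      intro h hh
      rcases Nat.eq_zero_or_pos k with hk | hk
      · subst hk
        obtain ⟨x, hx⟩ := h1surj h
        exact ⟨x, by rw [Subgroup.top_lowerCentralSeries_one]; exact hx⟩
      · have hhc : h ∈ commutator H := by
          have hle : Subgroup.lowerCentralSeries (⊤ : Subgroup H) k ≤ Subgroup.lowerCentralSeries (⊤ : Subgroup H) 1 :=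
            Subgroup.lowerCentralSeries_antitone _ hk
          rw [Subgroup.top_lowerCentralSeries_one] at hle
          exact hle hh
        have : h ∈ (commutator (FreeGroup H)).map (presHom H) := by
          rw [aux_map_commutator_eq]; exact hhc
        obtain ⟨w', hw'c, hw'h⟩ := this
        have hw'S : w' ∈ lcsPre H k := Subgroup.mem_comap.mpr (by rw [hw'h]; exact hh)
        refine ⟨presHom G (lam w'), ?_⟩
        have hKS := KS w' hw'c
        have hmem : presHom H ((FreeGroup.map φ) (lam w') * w'⁻¹) ∈
            Subgroup.lowerCentralSeries (⊤ : Subgroup H) (k + 1) := by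
          rw [← aux_map_den H k]
          exact Subgroup.mem_map_of_mem _ hKS
        have e : presHom H ((FreeGroup.map φ) (lam w') * w'⁻¹) =
            φ (presHom G (lam w')) * h⁻¹ := by
          rw [map_mul, map_inv, hw'h]
          congr 2
          exact DFunLike.congr_fun (presHom_naturality φ) (lam w')
        rw [e] at hmem
        have e2 : (φ (presHom G (lam w')))⁻¹ * h =
            (φ (presHom G (lam w')))⁻¹ * (φ (presHom G (lam w')) * h⁻¹)⁻¹ *
              (φ (presHom G (lam w')))⁻¹⁻¹ := by group
        rw [e2]
        exact Subgroup.Normal.conj_mem inferInstance _ (inv_mem hmem) _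
    -- Assemble bijectivity at `k + 1`.
    constructor
    · intro A B
      refine QuotientGroup.induction_on A ?_
      refine QuotientGroup.induction_on B ?_
      intro y x hxy
      rw [lcsQuotMap_mk, lcsQuotMap_mk] at hxy
      have hmem : (φ x)⁻¹ * φ y ∈ Subgroup.lowerCentralSeries (⊤ : Subgroup H) (k + 1) := (QuotientGroup.eq).mp hxy
      rw [← map_inv, ← map_mul] at hmem
      have hk1 : x⁻¹ * y ∈ Subgroup.lowerCentralSeries (⊤ : Subgroup G) k := by
        refine inj_k _ ?_
        exact Subgroup.lowerCentralSeries_antitone _ (Nat.le_succ k) hmem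
      have : x⁻¹ * y ∈ Subgroup.lowerCentralSeries (⊤ : Subgroup G) (k + 1) := stepI _ hk1 hmem
      exact (QuotientGroup.eq).mpr this
    · intro B
      refine QuotientGroup.induction_on B ?_
      intro h
      obtain ⟨g, hg⟩ := stepS ((φ (a h))⁻¹ * h) (ha h)
      set x := a h with hxdef
      refine ⟨((x * g : G) : G ⧸ Subgroup.lowerCentralSeries (⊤ : Subgroup G) (k + 1)), ?_⟩
      rw [lcsQuotMap_mk]
      refine (QuotientGroup.eq).mpr ?_
      rw [map_mul, mul_inv_rev, mul_assoc]
      exact hg
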